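/- Let U = [u_1,…,u_{d1}] ∈ ℝ^{d2×d1} and V = [v_1,…,v_{d1}] ∈ ℝ^{d0×d1}, let x_1,…,x_n ∈ ℝ^{d0} and y_1,…,y_n ∈ ℝ^{d2}, and let p ∈ [0,1). Let B be a random d1×d1 diagonal matrix whose diagonal entries are independent, each taking value 1/(1−p) with probability 1−p and 0 with probability p. Then (1/n)·Σ_{i=1}^n E_B[‖y_i − U B σ(Vᵀ x_i)‖²] = (1/n)·Σ_{i=1}^n ‖y_i − U σ(Vᵀ x_i)‖² + (p/(1−p))·Σ_{j=1}^{d1} ‖u_j‖²·(1/n)·Σ_{i=1}^n σ(v_jᵀ x_i)². -/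

import Mathlib

/-!
For a fixed sample and output coordinate, the dropout prediction is `∑ⱼ wⱼ ξⱼ` with independent
scales `ξⱼ` of mean `1` and variance `p / (1 - p)`. Hence
`E (c - ∑ⱼ wⱼ ξⱼ)² = (c - ∑ⱼ wⱼ)² + Var (∑ⱼ wⱼ ξⱼ) = (c - ∑ⱼ wⱼ)² + p / (1 - p) ∑ⱼ wⱼ²`,
and summing over outputs and samples turns the variance terms into the weighted penalty.
-/

open MeasureTheory Matrix

/-- The law of a single dropout mask entry: `true` (kept) w.p. `1 - p`,
`false` (dropped) w.p. `p`. -/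
noncomputable def dropMeasure (p : ℝ) (hp0 : 0 ≤ p) : Measure Bool :=
  (PMF.bernoulli (Real.toNNReal (1 - p))
    (Real.toNNReal_le_one.mpr (by linarith))).toMeasure

open ProbabilityTheory

section

variable {ι : Type*} [Fintype ι] {Ω : ι → Type*} {mΩ : ∀ i, MeasurableSpace (Ω i)}
  {μ : (i : ι) → Measure (Ω i)} [∀ i, IsProbabilityMeasure (μ i)]

theorem integral_sq_const_sub_sum_pi {X : Π i, Ω i → ℝ} (hX : ∀ i, MemLp (X i) 2 (μ i))
    (c : ℝ) (w : ι → ℝ) :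
    ∫ ω, (c - ∑ i, w i * X i (ω i)) ^ 2 ∂Measure.pi μ
      = (c - ∑ i, w i * ∫ a, X i a ∂μ i) ^ 2 + ∑ i, w i ^ 2 * Var[X i; μ i] := by
  have hwX : ∀ i, MemLp (fun a => w i * X i a) 2 (μ i) := fun i => (hX i).const_mul (w i)
  have hcoord : ∀ i, MemLp (fun ω : Π i, Ω i => w i * X i (ω i)) 2 (Measure.pi μ) :=
    fun i => (hwX i).comp_measurePreserving (measurePreserving_eval μ i)
  have hsum : MemLp (fun ω : Π i, Ω i => ∑ i, w i * X i (ω i)) 2 (Measure.pi μ) :=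
    memLp_finsetSum _ fun i _ => hcoord i
  have hmean : ∫ ω, (c - ∑ i, w i * X i (ω i)) ∂Measure.pi μ
      = c - ∑ i, w i * ∫ a, X i a ∂μ i := by
    rw [integral_sub (integrable_const c) (hsum.integrable one_le_two), integral_const,
      integral_finsetSum _ fun i _ => (hcoord i).integrable one_le_two]
    simp only [probReal_univ, one_smul]
    congr 1
    refine Finset.sum_congr rfl fun i _ => ?_
    rw [integral_comp_eval (hwX i).aestronglyMeasurable, integral_const_mul]
  have hvar : Var[fun ω => c - ∑ i, w i * X i (ω i); Measure.pi μ]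
      = ∑ i, w i ^ 2 * Var[X i; μ i] := by
    rw [variance_const_sub hsum.aestronglyMeasurable]
    convert variance_sum_pi hwX using 2
    · ext ω; simp
    · exact (variance_const_mul _ _ _).symm
  have hS : MemLp (fun ω : Π i, Ω i => c - ∑ i, w i * X i (ω i)) 2 (Measure.pi μ) :=
    (memLp_const c).sub hsum
  rw [← hmean, ← hvar, variance_eq_sub hS]
  simp only [Pi.pow_apply]
  ring

end

instance (p : ℝ) (hp0 : 0 ≤ p) : IsProbabilityMeasure (dropMeasure p hp0) := by
  unfold dropMeasure; infer_instance

set_option linter.deprecated false in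
lemma integral_dropMeasure {p : ℝ} (hp0 : 0 ≤ p) (hp1 : p ≤ 1) (g : Bool → ℝ) :
    ∫ b, g b ∂dropMeasure p hp0 = (1 - p) * g true + p * g false := by
  have hq : Real.toNNReal (1 - p) ≤ 1 := Real.toNNReal_le_one.mpr (by linarith)
  rw [dropMeasure, PMF.integral_eq_sum, Fintype.sum_bool]
  simp only [PMF.bernoulli_apply, cond_true, cond_false, smul_eq_mul, ENNReal.coe_toReal,
    NNReal.coe_sub hq, NNReal.coe_one, Real.coe_toNNReal _ (sub_nonneg.mpr hp1)]
  ring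

/-- The diagonal entry `B_jj` of the dropout matrix as a function of the mask bit. -/
noncomputable def dropoutScale (p : ℝ) (b : Bool) : ℝ := if b then (1 - p)⁻¹ else 0

lemma integral_dropoutScale {p : ℝ} (hp0 : 0 ≤ p) (hp1 : p < 1) :
    ∫ b, dropoutScale p b ∂dropMeasure p hp0 = 1 := by
  have : 1 - p ≠ 0 := by linarith
  rw [integral_dropMeasure hp0 hp1.le]
  simp [dropoutScale, this]

lemma variance_dropoutScale {p : ℝ} (hp0 : 0 ≤ p) (hp1 : p < 1) :
    Var[dropoutScale p; dropMeasure p hp0] = p / (1 - p) := by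
  have : 1 - p ≠ 0 := by linarith
  rw [variance_eq_sub .of_discrete, integral_dropoutScale hp0 hp1,
    integral_dropMeasure hp0 hp1.le]
  simp only [Pi.pow_apply, dropoutScale, ↓reduceIte, Bool.false_eq_true]
  field_simp
  ring

lemma integral_sq_sub_sum_dropoutScale {ι : Type*} [Fintype ι] {p : ℝ} (hp0 : 0 ≤ p)
    (hp1 : p < 1) (c : ℝ) (w : ι → ℝ) :
    ∫ ω, (c - ∑ j, w j * dropoutScale p (ω j)) ^ 2 ∂(Measure.pi fun _ : ι => dropMeasure p hp0)
      = (c - ∑ j, w j) ^ 2 + p / (1 - p) * ∑ j, w j ^ 2 := by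
  rw [integral_sq_const_sub_sum_pi (fun _ => .of_discrete)]
  simp only [integral_dropoutScale hp0 hp1, variance_dropoutScale hp0 hp1, mul_one,
    Finset.mul_sum]
  exact congrArg _ (Finset.sum_congr rfl fun j _ => mul_comm _ _)

lemma integral_sum_sq_sub_mulVec_dropoutScale {m ι : Type*} [Fintype m] [Fintype ι]
    {p : ℝ} (hp0 : 0 ≤ p) (hp1 : p < 1) (U : Matrix m ι ℝ) (a : ι → ℝ) (y : m → ℝ) :
    ∫ ω, ∑ k, (y k - (U *ᵥ fun j => dropoutScale p (ω j) * a j) k) ^ 2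
        ∂(Measure.pi fun _ : ι => dropMeasure p hp0)
      = ∑ k, (y k - (U *ᵥ a) k) ^ 2
        + p / (1 - p) * ∑ j, (∑ k, U k j ^ 2) * a j ^ 2 := by
  have hU : ∀ (k : m) (b : ι → ℝ), (U *ᵥ b) k = ∑ j, U k j * b j := fun _ _ => rfl
  rw [integral_finsetSum _ fun _ _ => .of_finite]
  simp only [hU, ← mul_assoc, mul_right_comm _ (dropoutScale p _),
    integral_sq_sub_sum_dropoutScale hp0 hp1, Finset.sum_add_distrib, ← Finset.mul_sum]
  simp only [mul_pow, Finset.sum_mul]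
  rw [Finset.sum_comm]

/-- **Dropout objective for two-layer ReLU networks.**
Averaging over the random diagonal dropout matrix `B` (iid diagonal entries,
`1/(1-p)` w.p. `1-p`, `0` w.p. `p`), the dropout empirical risk
`(1/n) Σ_i E_B ‖y_i - U B σ(Vᵀ x_i)‖²` equals the plain empirical risk plus
`(p/(1-p)) Σ_j ‖u_j‖² (1/n) Σ_i σ(v_jᵀ x_i)²`. -/
theorem dropout_objective_two_layer_relu
    {d0 d1 d2 n : ℕ}
    (U : Matrix (Fin d2) (Fin d1) ℝ) (V : Matrix (Fin d0) (Fin d1) ℝ)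
    (x : Fin n → Fin d0 → ℝ) (y : Fin n → Fin d2 → ℝ)
    (p : ℝ) (hp0 : 0 ≤ p) (hp1 : p < 1) :
    (1 / n : ℝ) * ∑ i : Fin n,
      ∫ ω : Fin d1 → Bool,
        ∑ k : Fin d2,
          (y i k - U.mulVec
            (fun j => (if ω j then (1 - p)⁻¹ else 0) * max (Vᵀ.mulVec (x i) j) 0) k) ^ 2
        ∂(Measure.pi fun _ : Fin d1 => dropMeasure p hp0)
    = (1 / n : ℝ) * ∑ i : Fin n, ∑ k : Fin d2,
        (y i k - U.mulVec (fun j => max (Vᵀ.mulVec (x i) j) 0) k) ^ 2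
      + (p / (1 - p)) * ∑ j : Fin d1,
          (∑ k : Fin d2, (U k j) ^ 2) *
            ((1 / n : ℝ) * ∑ i : Fin n, max (Vᵀ.mulVec (x i) j) 0 ^ 2) := by
  simp only [← dropoutScale.eq_def,
    integral_sum_sq_sub_mulVec_dropoutScale hp0 hp1, Finset.sum_add_distrib,
    ← Finset.mul_sum, mul_add]
  congr 1
  rw [Finset.sum_comm]
  simp only [Finset.mul_sum]
  exact Finset.sum_congr rfl fun j _ => Finset.sum_congr rfl fun i _ => by ring
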